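/- Let (Ω̂, 𝓑̂, P̂) be a probability space carrying independent unit-exponentially distributed random variables E₁, E₂, let f₁, f₂ : [0,∞) → [0,∞) be measurable with ∫_0^t f_i(s) ds < ∞ for all t ≥ 0 and ∫_0^∞ f_i(s) ds = ∞, set Λ_i(t) := ∫_0^t f_i(s) ds, T₁ := inf{t > 0 : Λ₁(t) ≥ E₁} and T₂ := T₁ + inf{t > 0 : Λ₂(t) ≥ E₂}. Then for every bounded measurable Z : [0,∞) → [0,∞) and all 0 ≤ t ≤ s: ∫_{Ω̂} 1_{{t < T₁}} 1_{{T₂ ≤ s}} Z(T₂) dP̂ = ∫_t^s ( ∫_0^{s−y} Z(y + x) e^{−Λ₂(x)} f₂(x) dx ) e^{−Λ₁(y)} f₁(y) dy. -/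

import Mathlib

/-!
Write `Λ⁻¹ e = inf {t > 0 | e ≤ Λ t}` for the generalized inverse of a cumulative hazard `Λ`, so
that `T₁ = Λ₁⁻¹ E₁` and `T₂ - T₁ = Λ₂⁻¹ E₂`. Because `Λ` is continuous and nondecreasing,
`Λ⁻¹ e ≤ r ↔ e ≤ Λ r`; hence for a unit exponential `E` the distribution function of `Λ⁻¹ E` is
`1 - exp (-Λ)`. The function `exp (-Λ)` is absolutely continuous with derivative `-f exp (-Λ)`
almost everywhere, so `Λ⁻¹ E` has density `f exp (-Λ)` on `(0, ∞)`. By independence the pair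
`(T₁, T₂ - T₁)` is distributed according to the product of the two densities, and Tonelli
turns the expectation into the iterated integral.
-/

open MeasureTheory ProbabilityTheory Set Filter Topology Real
open scoped ENNReal

theorem LipschitzOnWith.comp_absolutelyContinuousOnInterval {X Y : Type*} [PseudoMetricSpace X]
    [PseudoMetricSpace Y] {g : Y → X} {K : NNReal} {s : Set Y} {f : ℝ → Y} {a b : ℝ}
    (hg : LipschitzOnWith K g s) (hfs : MapsTo f (uIcc a b) s)
    (hf : AbsolutelyContinuousOnInterval f a b) :
    AbsolutelyContinuousOnInterval (g ∘ f) a b := by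
  unfold AbsolutelyContinuousOnInterval at hf ⊢
  refine squeeze_zero' (Eventually.of_forall fun _ => Finset.sum_nonneg fun _ _ => dist_nonneg)
    ?_ (by simpa using hf.const_mul (K : ℝ))
  rw [eventually_inf_principal]
  filter_upwards with E hE
  rw [Finset.mul_sum]
  gcongr with i hi
  exact hg.dist_le_mul _ (hfs (hE.1 i hi).1) _ (hfs (hE.1 i hi).2)

theorem lipschitzOnWith_exp_neg : LipschitzOnWith 1 (fun x : ℝ => exp (-x)) (Ici 0) := by
  refine (convex_Ici 0).lipschitzOnWith_of_nnnorm_hasDerivWithin_le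
    (fun x _ => ((hasDerivAt_neg x).exp).hasDerivWithinAt) fun x hx => ?_
  rw [← NNReal.coe_le_coe, coe_nnnorm, NNReal.coe_one, Real.norm_eq_abs]
  simpa [abs_of_pos (exp_pos _)] using hx

theorem map_eq_expMeasure_one {Ω : Type*} [MeasurableSpace Ω] {P : Measure Ω}
    [IsProbabilityMeasure P] {E : Ω → ℝ} (hE : Measurable E)
    (hsurv : ∀ x, 0 ≤ x → P {ω | x < E ω} = ENNReal.ofReal (exp (-x))) :
    P.map E = expMeasure 1 := by
  have := Measure.isProbabilityMeasure_map (μ := P) hE.aemeasurable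
  have := isProbabilityMeasure_expMeasure zero_lt_one
  refine Measure.ext_of_Iic _ _ fun a => ?_
  have hcompl : P (E ⁻¹' Iic a) = 1 - P {ω | a < E ω} := by
    rw [← prob_compl_eq_one_sub (measurableSet_lt measurable_const hE)]
    congr 1
    ext ω
    simp
  rw [Measure.map_apply hE measurableSet_Iic, hcompl, ← ofReal_cdf, cdf_expMeasure_eq zero_lt_one,
    one_mul]
  split_ifs with ha
  · rw [hsurv a ha, ← ENNReal.ofReal_one, ← ENNReal.ofReal_sub _ (exp_pos _).le]
  · have : P {ω | a < E ω} = 1 := by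
      refine le_antisymm prob_le_one ?_
      calc (1 : ℝ≥0∞) = P {ω | 0 < E ω} := by simp [hsurv 0 le_rfl]
        _ ≤ P {ω | a < E ω} := measure_mono fun ω hω => (not_le.1 ha).trans hω
    simp [this]

theorem setLIntegral_ofReal_le_of_le {α : Type*} [MeasurableSpace α] {μ : Measure α}
    [IsProbabilityMeasure μ] (S : Set α) {φ : α → ℝ} {C : ℝ} (hφC : ∀ x, φ x ≤ C) :
    ∫⁻ x in S, ENNReal.ofReal (φ x) ∂μ ≤ ENNReal.ofReal C :=
  calc ∫⁻ x in S, ENNReal.ofReal (φ x) ∂μ ≤ ∫⁻ _ in S, ENNReal.ofReal C ∂μ :=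
        lintegral_mono fun x => ENNReal.ofReal_le_ofReal (hφC x)
    _ = ENNReal.ofReal C * μ S := setLIntegral_const S _
    _ ≤ ENNReal.ofReal C := mul_le_of_le_one_right' prob_le_one

theorem measurable_setIntegral_Ioc_sub {F : ℝ × ℝ → ℝ} (hF : Measurable F) (a b : ℝ) :
    Measurable fun y => ∫ x in Ioc a (b - y), F (y, x) := by
  have hset : MeasurableSet {p : ℝ × ℝ | p.2 ∈ Ioc a (b - p.1)} :=
    (measurableSet_lt measurable_const measurable_snd).inter
      (measurableSet_le measurable_snd (measurable_const.sub measurable_fst))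
  convert ((hF.indicator hset).stronglyMeasurable.integral_prod_right' (ν := volume)).measurable
    using 2 with y
  rw [← integral_indicator measurableSet_Ioc]
  rfl

theorem lintegral_lintegral_indicator {α β : Type*} [MeasurableSpace α] [MeasurableSpace β]
    {μ : Measure α} {ν : Measure β} {A : Set α} (hA : MeasurableSet A) {B : α → Set β}
    (hB : ∀ y, MeasurableSet (B y)) (F : α × β → ℝ≥0∞) :
    ∫⁻ y, ∫⁻ x, {p : α × β | p.1 ∈ A ∧ p.2 ∈ B p.1}.indicator F (y, x) ∂ν ∂μ
      = ∫⁻ y in A, ∫⁻ x in B y, F (y, x) ∂ν ∂μ := by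
  rw [← lintegral_indicator hA]
  congr with y
  by_cases hy : y ∈ A
  · rw [indicator_of_mem hy, ← lintegral_indicator (hB y)]
    congr with x
    by_cases hx : x ∈ B y <;> simp [hx, hy]
  · simp [hy]

structure IsHazardRate (f : ℝ → ℝ) : Prop where
  measurable : Measurable f
  nonneg : ∀ s, 0 ≤ s → 0 ≤ f s
  lintegral_Ioc_lt_top : ∀ t, ∫⁻ s in Ioc 0 t, ENNReal.ofReal (f s) < ⊤
  lintegral_Ioi_eq_top : ∫⁻ s in Ioi 0, ENNReal.ofReal (f s) = ⊤

noncomputable def cumHazard (f : ℝ → ℝ) (t : ℝ) : ℝ := ∫ s in Ioc 0 t, f s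

noncomputable def cumHazardInv (f : ℝ → ℝ) (e : ℝ) : ℝ := sInf {t | 0 < t ∧ e ≤ cumHazard f t}

noncomputable def hazardLaw (f : ℝ → ℝ) : Measure ℝ :=
  (volume.restrict (Ioi 0)).withDensity fun y => ENNReal.ofReal (f y * exp (-cumHazard f y))

theorem cumHazard_of_nonpos (f : ℝ → ℝ) {t : ℝ} (ht : t ≤ 0) : cumHazard f t = 0 := by
  simp [cumHazard, Ioc_eq_empty_of_le ht]

-- The zero extension of `f` makes `cumHazard f` a primitive on all of `ℝ`, so that the
-- fundamental theorem of calculus for interval integrals applies to it.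
theorem cumHazard_eq_intervalIntegral (f : ℝ → ℝ) (t : ℝ) :
    cumHazard f t = ∫ s in 0..t, (Ioi 0).indicator f s := by
  rcases le_total 0 t with ht | ht
  · rw [intervalIntegral.integral_of_le ht, cumHazard]
    exact setIntegral_congr_fun measurableSet_Ioc fun s hs => (indicator_of_mem hs.1 f).symm
  · rw [cumHazard_of_nonpos f ht, intervalIntegral.integral_of_ge ht,
      setIntegral_eq_zero_of_forall_eq_zero fun s (hs : s ∈ Ioc t 0) =>
        indicator_of_notMem (s := Ioi 0) (not_lt.2 hs.2) f, neg_zero]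

theorem cumHazardInv_nonneg (f : ℝ → ℝ) (e : ℝ) : 0 ≤ cumHazardInv f e :=
  Real.sInf_nonneg fun _ ht => ht.1.le

namespace IsHazardRate

variable {f : ℝ → ℝ}

theorem integrableOn_Ioc (hf : IsHazardRate f) (t : ℝ) : IntegrableOn f (Ioc 0 t) :=
  ⟨hf.measurable.aestronglyMeasurable, (hasFiniteIntegral_iff_ofReal
    (ae_restrict_of_forall_mem measurableSet_Ioc fun s hs => hf.nonneg s hs.1.le)).2
    (hf.lintegral_Ioc_lt_top t)⟩

theorem intervalIntegrable_indicator (hf : IsHazardRate f) (a b : ℝ) :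
    IntervalIntegrable ((Ioi 0).indicator f) volume a b := by
  rw [intervalIntegrable_iff, IntegrableOn, integrable_indicator_iff measurableSet_Ioi,
    IntegrableOn, Measure.restrict_restrict measurableSet_Ioi]
  exact (hf.integrableOn_Ioc (max a b)).mono_set fun x hx => ⟨hx.1, hx.2.2.trans (by simp)⟩

theorem ofReal_cumHazard (hf : IsHazardRate f) (t : ℝ) :
    ENNReal.ofReal (cumHazard f t) = ∫⁻ s in Ioc 0 t, ENNReal.ofReal (f s) :=
  ofReal_integral_eq_lintegral_ofReal (hf.integrableOn_Ioc t)
    (ae_restrict_of_forall_mem measurableSet_Ioc fun s hs => hf.nonneg s hs.1.le)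

theorem continuous_cumHazard (hf : IsHazardRate f) : Continuous (cumHazard f) := by
  simpa only [funext (cumHazard_eq_intervalIntegral f)] using
    intervalIntegral.continuous_primitive hf.intervalIntegrable_indicator 0

theorem monotone_cumHazard (hf : IsHazardRate f) : Monotone (cumHazard f) := fun _ b hab =>
  setIntegral_mono_set (hf.integrableOn_Ioc b)
    (ae_restrict_of_forall_mem measurableSet_Ioc fun s hs => hf.nonneg s hs.1.le)
    (Ioc_subset_Ioc_right hab).eventuallyLE

theorem cumHazard_nonneg (hf : IsHazardRate f) (t : ℝ) : 0 ≤ cumHazard f t :=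
  setIntegral_nonneg measurableSet_Ioc fun s hs => hf.nonneg s hs.1.le

theorem tendsto_cumHazard_atTop (hf : IsHazardRate f) : Tendsto (cumHazard f) atTop atTop := by
  have hmono : Monotone fun t : ℝ => Ioc 0 t := fun a b hab => Ioc_subset_Ioc_right hab
  have hunion : ⋃ t : ℝ, Ioc 0 t = Ioi 0 :=
    iUnion_Ioc_eq_Ioi_self_iff.2 fun x _ => ⟨x, le_rfl⟩
  have := tendsto_measure_iUnion_atTop (μ := volume.withDensity fun s => ENNReal.ofReal (f s)) hmono
  simp only [hunion, withDensity_apply _ measurableSet_Ioi, hf.lintegral_Ioi_eq_top] at this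
  refine ENNReal.tendsto_ofReal_nhds_top.1 (this.congr fun t => ?_)
  simp [withDensity_apply _ measurableSet_Ioc, hf.ofReal_cumHazard]

theorem cumHazardInv_le_iff (hf : IsHazardRate f) {e : ℝ} (he : 0 < e) (r : ℝ) :
    cumHazardInv f e ≤ r ↔ e ≤ cumHazard f r := by
  have hpos : ∀ {t}, e ≤ cumHazard f t → 0 < t := fun {t} ht =>
    not_le.1 fun h => (he.trans_le ht).ne' (cumHazard_of_nonpos f h)
  have hset : {t | 0 < t ∧ e ≤ cumHazard f t} = {t | e ≤ cumHazard f t} :=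
    ext fun t => ⟨And.right, fun ht => ⟨hpos ht, ht⟩⟩
  have hne : {t | e ≤ cumHazard f t}.Nonempty :=
    (hf.tendsto_cumHazard_atTop.eventually_ge_atTop e).exists
  have hbdd : BddBelow {t | e ≤ cumHazard f t} := ⟨0, fun t ht => (hpos ht).le⟩
  rw [cumHazardInv, hset]
  refine ⟨fun h => ?_, fun h => csInf_le hbdd h⟩
  exact ((isClosed_le continuous_const hf.continuous_cumHazard).csInf_mem hne hbdd).trans
    (hf.monotone_cumHazard h)

theorem cumHazardInv_of_nonpos (hf : IsHazardRate f) {e : ℝ} (he : e ≤ 0) :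
    cumHazardInv f e = 0 := by
  have : {t | 0 < t ∧ e ≤ cumHazard f t} = Ioi 0 :=
    ext fun t => ⟨And.left, fun ht => ⟨ht, he.trans (hf.cumHazard_nonneg t)⟩⟩
  rw [cumHazardInv, this, csInf_Ioi]

theorem measurable_cumHazardInv (hf : IsHazardRate f) : Measurable (cumHazardInv f) := by
  refine Monotone.measurable fun a b hab => csInf_le_csInf ⟨0, fun t ht => ht.1.le⟩ ?_
    fun t ht => ⟨ht.1, hab.trans ht.2⟩
  obtain ⟨t, ht, ht0⟩ := ((hf.tendsto_cumHazard_atTop.eventually_ge_atTop b).and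
    (eventually_gt_atTop 0)).exists
  exact ⟨t, ht0, ht⟩

theorem integral_mul_exp_neg_cumHazard (hf : IsHazardRate f) {a : ℝ}
    (ha : 0 ≤ a) : ∫ x in 0..a, f x * exp (-cumHazard f x) = 1 - exp (-cumHazard f a) := by
  have hint := hf.intervalIntegrable_indicator 0 a
  have hΛ : cumHazard f = fun x => ∫ s in 0..x, (Ioi 0).indicator f s :=
    funext (cumHazard_eq_intervalIntegral f)
  have hac : AbsolutelyContinuousOnInterval (fun x => exp (-cumHazard f x)) 0 a :=
    lipschitzOnWith_exp_neg.comp_absolutelyContinuousOnInterval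
      (fun x _ => hf.cumHazard_nonneg x)
      (hΛ ▸ hint.absolutelyContinuousOnInterval_intervalIntegral left_mem_uIcc)
  have hderiv : ∀ᵐ x, x ∈ uIoc 0 a →
      f x * exp (-cumHazard f x) = -deriv (fun x => exp (-cumHazard f x)) x := by
    filter_upwards [hint.ae_hasDerivAt_integral] with x hx hxa
    have hΛx : HasDerivAt (cumHazard f) ((Ioi 0).indicator f x) x :=
      hΛ ▸ hx (uIoc_subset_uIcc hxa) 0 left_mem_uIcc
    rw [uIoc_of_le ha] at hxa
    have hG : HasDerivAt (fun x => exp (-cumHazard f x))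
        (exp (-cumHazard f x) * -(Ioi 0).indicator f x) x := hΛx.neg.exp
    rw [hG.deriv, indicator_of_mem (s := Ioi 0) hxa.1]
    ring
  rw [intervalIntegral.integral_congr_ae hderiv, intervalIntegral.integral_neg,
    hac.integral_deriv_eq_sub, cumHazard_of_nonpos f le_rfl]
  simp

theorem hazardLaw_Iic (hf : IsHazardRate f) (a : ℝ) :
    hazardLaw f (Iic a) = ENNReal.ofReal (1 - exp (-cumHazard f a)) := by
  rw [hazardLaw, withDensity_apply _ measurableSet_Iic, Measure.restrict_restrict measurableSet_Iic,
    Iic_inter_Ioi]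
  rcases le_total a 0 with ha | ha
  · simp [Ioc_eq_empty_of_le ha, cumHazard_of_nonpos f ha]
  have hint : IntegrableOn (fun x => f x * exp (-cumHazard f x)) (Ioc 0 a) :=
    (hf.integrableOn_Ioc a).mul_bdd (c := 1) (hf.continuous_cumHazard.neg.rexp).aestronglyMeasurable
      (ae_restrict_of_forall_mem measurableSet_Ioc fun x _ => by
        simpa [abs_of_pos (exp_pos _)] using hf.cumHazard_nonneg x)
  rw [← ofReal_integral_eq_lintegral_ofReal hint (ae_restrict_of_forall_mem measurableSet_Ioc
      fun x hx => mul_nonneg (hf.nonneg x hx.1.le) (exp_pos _).le),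
    ← intervalIntegral.integral_of_le ha, hf.integral_mul_exp_neg_cumHazard ha]

theorem preimage_cumHazardInv_Iic (hf : IsHazardRate f) {a : ℝ} (ha : 0 ≤ a) :
    cumHazardInv f ⁻¹' Iic a = Iic (cumHazard f a) := by
  ext u
  rcases le_or_gt u 0 with hu | hu
  · simp [hf.cumHazardInv_of_nonpos hu, ha, hu.trans (hf.cumHazard_nonneg a)]
  · exact hf.cumHazardInv_le_iff hu a

theorem map_cumHazardInv_expMeasure (hf : IsHazardRate f) :
    (expMeasure 1).map (cumHazardInv f) = hazardLaw f := by
  have := isProbabilityMeasure_expMeasure zero_lt_one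
  have :=
    Measure.isProbabilityMeasure_map (μ := expMeasure 1) hf.measurable_cumHazardInv.aemeasurable
  refine Measure.ext_of_Iic _ _ fun a => ?_
  rw [Measure.map_apply hf.measurable_cumHazardInv measurableSet_Iic, hf.hazardLaw_Iic]
  rcases lt_or_ge a 0 with ha | ha
  · have : cumHazardInv f ⁻¹' Iic a = ∅ :=
      eq_empty_of_forall_notMem fun u hu => (ha.trans_le (cumHazardInv_nonneg f u)).not_ge hu
    simp [this, cumHazard_of_nonpos f ha.le]
  · rw [hf.preimage_cumHazardInv_Iic ha, ← ofReal_cdf, cdf_expMeasure_eq zero_lt_one,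
      if_pos (hf.cumHazard_nonneg a), one_mul]

theorem isProbabilityMeasure_hazardLaw (hf : IsHazardRate f) :
    IsProbabilityMeasure (hazardLaw f) := by
  have := isProbabilityMeasure_expMeasure zero_lt_one
  rw [← hf.map_cumHazardInv_expMeasure]
  exact Measure.isProbabilityMeasure_map hf.measurable_cumHazardInv.aemeasurable

theorem setLIntegral_hazardLaw (hf : IsHazardRate f) {S : Set ℝ}
    (hS : MeasurableSet S) {φ : ℝ → ℝ} (hφ : Measurable φ) (hφ0 : ∀ x, 0 ≤ φ x) {C : ℝ}
    (hφC : ∀ x, φ x ≤ C) :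
    ∫⁻ x in S, ENNReal.ofReal (φ x) ∂hazardLaw f
      = ENNReal.ofReal (∫ x in S ∩ Ioi 0, φ x * exp (-cumHazard f x) * f x) := by
  have := hf.isProbabilityMeasure_hazardLaw
  have hfin := ((setLIntegral_ofReal_le_of_le (μ := hazardLaw f) S hφC).trans_lt
    ENNReal.ofReal_lt_top).ne
  have hmeas : Measurable fun x => φ x * exp (-cumHazard f x) * f x :=
    (hφ.mul hf.continuous_cumHazard.neg.rexp.measurable).mul hf.measurable
  have hrw : ∫⁻ x in S, ENNReal.ofReal (φ x) ∂hazardLaw f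
      = ∫⁻ x in S ∩ Ioi 0, ENNReal.ofReal (φ x * exp (-cumHazard f x) * f x) := by
    have hdens : Measurable fun y => ENNReal.ofReal (f y * exp (-cumHazard f y)) :=
      (hf.measurable.mul hf.continuous_cumHazard.neg.rexp.measurable).ennreal_ofReal
    rw [hazardLaw, restrict_withDensity hS, lintegral_withDensity_eq_lintegral_mul _ hdens
      hφ.ennreal_ofReal, Measure.restrict_restrict hS]
    refine setLIntegral_congr_fun (hS.inter measurableSet_Ioi) fun x hx => ?_
    rw [Pi.mul_apply, ← ENNReal.ofReal_mul (mul_nonneg (hf.nonneg x hx.2.le) (exp_pos _).le)]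
    ring_nf
  rw [hrw] at hfin ⊢
  rw [integral_eq_lintegral_of_nonneg_ae (ae_restrict_of_forall_mem (hS.inter measurableSet_Ioi)
      fun x hx => mul_nonneg (mul_nonneg (hφ0 x) (exp_pos _).le) (hf.nonneg x hx.2.le))
    hmeas.aestronglyMeasurable, ENNReal.ofReal_toReal hfin]

end IsHazardRate

section TwoHazardRates

variable {f₁ f₂ : ℝ → ℝ}

theorem map_cumHazardInv_prod {Ω : Type*} [MeasurableSpace Ω] {P : Measure Ω}
    [IsProbabilityMeasure P] {E₁ E₂ : Ω → ℝ} (hE₁ : Measurable E₁) (hE₂ : Measurable E₂)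
    (hind : IndepFun E₁ E₂ P) (hlaw₁ : P.map E₁ = expMeasure 1) (hlaw₂ : P.map E₂ = expMeasure 1)
    (hf₁ : IsHazardRate f₁) (hf₂ : IsHazardRate f₂) :
    P.map (fun ω => (cumHazardInv f₁ (E₁ ω), cumHazardInv f₂ (E₂ ω)))
      = (hazardLaw f₁).prod (hazardLaw f₂) := by
  rw [← hf₁.map_cumHazardInv_expMeasure, ← hlaw₁, ← hf₂.map_cumHazardInv_expMeasure, ← hlaw₂,
    Measure.map_prod_map _ _ hf₁.measurable_cumHazardInv hf₂.measurable_cumHazardInv,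
    ← hind.map_prod_eq_prod_map_map hE₁.aemeasurable hE₂.aemeasurable,
    Measure.map_map (hf₁.measurable_cumHazardInv.prodMap hf₂.measurable_cumHazardInv)
      (hE₁.prodMk hE₂)]
  rfl

theorem setLIntegral_comp_cumHazardInv_add {Ω : Type*} [MeasurableSpace Ω] {P : Measure Ω}
    [IsProbabilityMeasure P] {E₁ E₂ : Ω → ℝ} (hE₁ : Measurable E₁) (hE₂ : Measurable E₂)
    (hind : IndepFun E₁ E₂ P) (hlaw₁ : P.map E₁ = expMeasure 1) (hlaw₂ : P.map E₂ = expMeasure 1)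
    (hf₁ : IsHazardRate f₁) (hf₂ : IsHazardRate f₂) {Z : ℝ → ℝ} (hZ : Measurable Z) (t s : ℝ) :
    ∫⁻ ω in {ω | t < cumHazardInv f₁ (E₁ ω) ∧ cumHazardInv f₁ (E₁ ω) + cumHazardInv f₂ (E₂ ω) ≤ s},
        ENNReal.ofReal (Z (cumHazardInv f₁ (E₁ ω) + cumHazardInv f₂ (E₂ ω))) ∂P
      = ∫⁻ y in Ioc t s, ∫⁻ x in Iic (s - y), ENNReal.ofReal (Z (y + x)) ∂hazardLaw f₂
          ∂hazardLaw f₁ := by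
  have := hf₁.isProbabilityMeasure_hazardLaw
  have := hf₂.isProbabilityMeasure_hazardLaw
  set T₁ := fun ω => cumHazardInv f₁ (E₁ ω)
  set X := fun ω => cumHazardInv f₂ (E₂ ω)
  have hT₁ : Measurable T₁ := hf₁.measurable_cumHazardInv.comp hE₁
  have hX : Measurable X := hf₂.measurable_cumHazardInv.comp hE₂
  set K := {p : ℝ × ℝ | p.1 ∈ Ioc t s ∧ p.2 ∈ Iic (s - p.1)}.indicator
    fun p => ENNReal.ofReal (Z (p.1 + p.2))
  have hK : Measurable K :=
    (hZ.comp (measurable_fst.add measurable_snd)).ennreal_ofReal.indicator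
      (((measurableSet_lt measurable_const measurable_fst).inter
        (measurableSet_le measurable_fst measurable_const)).inter
        (measurableSet_le measurable_snd (measurable_const.sub measurable_fst)))
  have hevent : MeasurableSet {ω | t < T₁ ω ∧ T₁ ω + X ω ≤ s} :=
    (measurableSet_lt measurable_const hT₁).inter (measurableSet_le (hT₁.add hX) measurable_const)
  -- the second waiting time is nonnegative, so `T₁ + X ≤ s` already forces `T₁ ≤ s`
  have hindicator : ∀ ω, {ω | t < T₁ ω ∧ T₁ ω + X ω ≤ s}.indicator
      (fun ω => ENNReal.ofReal (Z (T₁ ω + X ω))) ω = K (T₁ ω, X ω) := fun ω => by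
    have hX0 := cumHazardInv_nonneg f₂ (E₂ ω)
    have hiff : (T₁ ω, X ω) ∈ {p : ℝ × ℝ | p.1 ∈ Ioc t s ∧ p.2 ∈ Iic (s - p.1)}
        ↔ ω ∈ {ω | t < T₁ ω ∧ T₁ ω + X ω ≤ s} :=
      ⟨fun ⟨⟨h₁, _⟩, h₂⟩ => ⟨h₁, by linarith [mem_Iic.1 h₂]⟩,
        fun ⟨h₁, h₂⟩ => ⟨⟨h₁, by linarith⟩, mem_Iic.2 (by linarith)⟩⟩
    simp only [K, indicator_apply, hiff]
  calc _ = ∫⁻ ω, K (T₁ ω, X ω) ∂P := by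
        rw [← lintegral_indicator hevent]
        exact lintegral_congr hindicator
    _ = ∫⁻ p, K p ∂(hazardLaw f₁).prod (hazardLaw f₂) := by
        rw [← map_cumHazardInv_prod hE₁ hE₂ hind hlaw₁ hlaw₂ hf₁ hf₂,
          lintegral_map hK (hT₁.prodMk hX)]
    _ = ∫⁻ y, ∫⁻ x, K (y, x) ∂hazardLaw f₂ ∂hazardLaw f₁ := lintegral_prod _ hK.aemeasurable
    _ = _ := lintegral_lintegral_indicator measurableSet_Ioc (fun _ => measurableSet_Iic) _

theorem setLIntegral_hazardLaw_Ioc_Iic (hf₁ : IsHazardRate f₁) (hf₂ : IsHazardRate f₂)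
    {Z : ℝ → ℝ} (hZ : Measurable Z) (hZ0 : ∀ x, 0 ≤ Z x) {C : ℝ} (hZC : ∀ x, Z x ≤ C) {t : ℝ}
    (ht : 0 ≤ t) (s : ℝ) :
    ∫⁻ y in Ioc t s, ∫⁻ x in Iic (s - y), ENNReal.ofReal (Z (y + x)) ∂hazardLaw f₂ ∂hazardLaw f₁
      = ENNReal.ofReal (∫ y in Ioc t s,
          (∫ x in Ioc 0 (s - y), Z (y + x) * exp (-cumHazard f₂ x) * f₂ x)
            * exp (-cumHazard f₁ y) * f₁ y) := by
  have := hf₂.isProbabilityMeasure_hazardLaw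
  set J := fun y => ∫ x in Ioc 0 (s - y), Z (y + x) * exp (-cumHazard f₂ x) * f₂ x
  have hinner : ∀ y, ∫⁻ x in Iic (s - y), ENNReal.ofReal (Z (y + x)) ∂hazardLaw f₂
      = ENNReal.ofReal (J y) := fun y => by
    rw [hf₂.setLIntegral_hazardLaw measurableSet_Iic (φ := fun x => Z (y + x))
      (hZ.comp (measurable_const_add y)) (fun _ => hZ0 _) (fun _ => hZC _), Iic_inter_Ioi]
  have hΛ₂ := hf₂.continuous_cumHazard.measurable
  have hf₂m := hf₂.measurable
  have hJ : Measurable J := measurable_setIntegral_Ioc_sub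
    (F := fun p => Z (p.1 + p.2) * exp (-cumHazard f₂ p.2) * f₂ p.2) (by fun_prop) 0 s
  have hJ0 : ∀ y, 0 ≤ J y := fun y => setIntegral_nonneg measurableSet_Ioc fun x hx =>
    mul_nonneg (mul_nonneg (hZ0 _) (exp_pos _).le) (hf₂.nonneg x hx.1.le)
  have hJC : ∀ y, J y ≤ C := fun y => (ENNReal.ofReal_le_ofReal_iff ((hZ0 0).trans (hZC 0))).1
    (hinner y ▸ setLIntegral_ofReal_le_of_le _ fun _ => hZC _)
  rw [setLIntegral_congr_fun measurableSet_Ioc fun y _ => hinner y,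
    hf₁.setLIntegral_hazardLaw measurableSet_Ioc hJ hJ0 hJC,
    inter_eq_left.2 (Ioc_subset_Ioi_self.trans (Ioi_subset_Ioi ht))]

end TwoHazardRates

/-- expected recovery payment `Z` paid at the second default time `T₂`
when `T₂ ∈ (t, s]` and the first default occurs after `t`, with deterministic intensities.
`Ω'` plays the role of `Ω̂`, `Phat` of `P̂`. -/
theorem stmt_18
    {Ω' : Type*} [MeasurableSpace Ω'] (Phat : Measure Ω') [IsProbabilityMeasure Phat]
    (E₁ E₂ : Ω' → ℝ) (hE₁ : Measurable E₁) (hE₂ : Measurable E₂)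
    (hEindep : IndepFun E₁ E₂ Phat)
    (hE₁exp : ∀ x : ℝ, 0 ≤ x → Phat {ω | x < E₁ ω} = ENNReal.ofReal (Real.exp (-x)))
    (hE₂exp : ∀ x : ℝ, 0 ≤ x → Phat {ω | x < E₂ ω} = ENNReal.ofReal (Real.exp (-x)))
    (f₁ f₂ : ℝ → ℝ) (hf₁_meas : Measurable f₁) (hf₂_meas : Measurable f₂)
    (hf₁_nonneg : ∀ s : ℝ, 0 ≤ s → 0 ≤ f₁ s) (hf₂_nonneg : ∀ s : ℝ, 0 ≤ s → 0 ≤ f₂ s)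
    (hf₁_fin : ∀ t : ℝ, ∫⁻ s in Set.Ioc (0:ℝ) t, ENNReal.ofReal (f₁ s) < ⊤)
    (hf₂_fin : ∀ t : ℝ, ∫⁻ s in Set.Ioc (0:ℝ) t, ENNReal.ofReal (f₂ s) < ⊤)
    (hf₁_inf : ∫⁻ s in Set.Ioi (0:ℝ), ENNReal.ofReal (f₁ s) = ⊤)
    (hf₂_inf : ∫⁻ s in Set.Ioi (0:ℝ), ENNReal.ofReal (f₂ s) = ⊤)
    (Λ₁ Λ₂ : ℝ → ℝ)
    (hΛ₁ : ∀ t : ℝ, Λ₁ t = ∫ s in Set.Ioc (0:ℝ) t, f₁ s)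
    (hΛ₂ : ∀ t : ℝ, Λ₂ t = ∫ s in Set.Ioc (0:ℝ) t, f₂ s)
    (T₁ T₂ : Ω' → ℝ)
    (hT₁ : ∀ ω, T₁ ω = sInf {t : ℝ | 0 < t ∧ E₁ ω ≤ Λ₁ t})
    (hT₂ : ∀ ω, T₂ ω = T₁ ω + sInf {t : ℝ | 0 < t ∧ E₂ ω ≤ Λ₂ t})
    (Z : ℝ → ℝ) (hZ_meas : Measurable Z) (hZ_nonneg : ∀ x, 0 ≤ Z x)
    (hZ_bdd : ∃ C : ℝ, ∀ x, Z x ≤ C) :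
    ∀ t s : ℝ, 0 ≤ t → t ≤ s →
      ∫⁻ ω in {ω | t < T₁ ω ∧ T₂ ω ≤ s}, ENNReal.ofReal (Z (T₂ ω)) ∂Phat
        = ENNReal.ofReal
            (∫ y in Set.Ioc t s,
              (∫ x in Set.Ioc (0:ℝ) (s - y), Z (y + x) * Real.exp (-Λ₂ x) * f₂ x)
                * Real.exp (-Λ₁ y) * f₁ y) := by
  intro t s ht _
  obtain ⟨C, hZC⟩ := hZ_bdd
  have hf₁ : IsHazardRate f₁ := ⟨hf₁_meas, hf₁_nonneg, hf₁_fin, hf₁_inf⟩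
  have hf₂ : IsHazardRate f₂ := ⟨hf₂_meas, hf₂_nonneg, hf₂_fin, hf₂_inf⟩
  obtain rfl : Λ₁ = cumHazard f₁ := funext hΛ₁
  obtain rfl : Λ₂ = cumHazard f₂ := funext hΛ₂
  obtain rfl : T₁ = fun ω => cumHazardInv f₁ (E₁ ω) := funext hT₁
  obtain rfl : T₂ = fun ω => cumHazardInv f₁ (E₁ ω) + cumHazardInv f₂ (E₂ ω) := funext hT₂
  rw [setLIntegral_comp_cumHazardInv_add hE₁ hE₂ hEindep (map_eq_expMeasure_one hE₁ hE₁exp)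
      (map_eq_expMeasure_one hE₂ hE₂exp) hf₁ hf₂ hZ_meas t s,
    setLIntegral_hazardLaw_Ioc_Iic hf₁ hf₂ hZ_meas hZ_nonneg hZC ht s]
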